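/- Let 4 ≤ k ≤ K be integers. Then in ℝ[A_K] one has the identities S(Adj_k^N) = (K−3)!·(k−2)·(k−1)·k·Adj_K^N and S(Opp_k^N) = (K−4)!·(k−3)·(k−2)·(k−1)·k·Opp_K^N. -/

import Mathlib

noncomputable section

namespace PRA

open FreeGroup

variable {α : Type*} [DecidableEq α]

/-- The endomorphism of the free group sending `x_i ↦ x_j x_i` and fixing other generators. -/
def lA (i j : α) : FreeGroup α →* FreeGroup α :=
  FreeGroup.lift fun p => if p = i then FreeGroup.of j * FreeGroup.of p else FreeGroup.of p

/-- The endomorphism of the free group sending `x_i ↦ x_j⁻¹ x_i` and fixing other generators. -/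
def lB (i j : α) : FreeGroup α →* FreeGroup α :=
  FreeGroup.lift fun p => if p = i then (FreeGroup.of j)⁻¹ * FreeGroup.of p else FreeGroup.of p

/-- The endomorphism of the free group sending `x_i ↦ x_i x_j` and fixing other generators. -/
def rA (i j : α) : FreeGroup α →* FreeGroup α :=
  FreeGroup.lift fun p => if p = i then FreeGroup.of p * FreeGroup.of j else FreeGroup.of p

/-- The endomorphism of the free group sending `x_i ↦ x_i x_j⁻¹` and fixing other generators. -/
def rB (i j : α) : FreeGroup α →* FreeGroup α :=
  FreeGroup.lift fun p => if p = i then FreeGroup.of p * (FreeGroup.of j)⁻¹ else FreeGroup.of p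

lemma lBA (i j : α) (h : i ≠ j) : (lB i j).comp (lA i j) = MonoidHom.id _ := by
  ext p
  by_cases hp : p = i
  · subst hp
    simp [lA, lB, Ne.symm h]
  · simp [lA, lB, hp]

lemma lAB (i j : α) (h : i ≠ j) : (lA i j).comp (lB i j) = MonoidHom.id _ := by
  ext p
  by_cases hp : p = i
  · subst hp
    simp [lA, lB, Ne.symm h]
  · simp [lA, lB, hp]

lemma rBA (i j : α) (h : i ≠ j) : (rB i j).comp (rA i j) = MonoidHom.id _ := by
  ext p
  by_cases hp : p = i
  · subst hp
    simp [rA, rB, Ne.symm h]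
  · simp [rA, rB, hp]

lemma rAB (i j : α) (h : i ≠ j) : (rA i j).comp (rB i j) = MonoidHom.id _ := by
  ext p
  by_cases hp : p = i
  · subst hp
    simp [rA, rB, Ne.symm h]
  · simp [rA, rB, hp]

/-- The Nielsen automorphism `L_{ij} : x_i ↦ x_j x_i` (defined to be `1` when `i = j`). -/
def nL (i j : α) : MulAut (FreeGroup α) :=
  if h : i = j then 1
  else MonoidHom.toMulEquiv (lA i j) (lB i j) (lBA i j h) (lAB i j h)

/-- The Nielsen automorphism `R_{ij} : x_i ↦ x_i x_j` (defined to be `1` when `i = j`). -/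
def nR (i j : α) : MulAut (FreeGroup α) :=
  if h : i = j then 1
  else MonoidHom.toMulEquiv (rA i j) (rB i j) (rBA i j h) (rAB i j h)

/-- The generating set of the group `A_k`: Nielsen automorphisms `L_{ij}^±`, `R_{ij}^±`
of `F_{k+1} = ⟨x_0, x_1, …, x_k⟩` with `i ≠ j` and `j ≠ 0`
(i.e. the C-generators, with `i = 0`, and the N-generators, with `i, j ≥ 1`). -/
def AgenSet (k : ℕ) : Set (MulAut (FreeGroup (Fin (k + 1)))) :=
  {φ | ∃ i j : Fin (k + 1), i ≠ j ∧ j ≠ 0 ∧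
    (φ = nL i j ∨ φ = (nL i j)⁻¹ ∨ φ = nR i j ∨ φ = (nR i j)⁻¹)}

/-- The group `A_k ≤ Aut(F_{k+1})`. -/
def Ak (k : ℕ) : Subgroup (MulAut (FreeGroup (Fin (k + 1)))) :=
  Subgroup.closure (AgenSet k)

lemma nL_mem {k : ℕ} (i j : Fin (k + 1)) (hj : j ≠ 0) : nL i j ∈ Ak k := by
  by_cases h : i = j
  · subst h
    rw [nL, dif_pos rfl]
    exact (Ak k).one_mem
  · exact Subgroup.subset_closure ⟨i, j, h, hj, Or.inl rfl⟩

lemma nR_mem {k : ℕ} (i j : Fin (k + 1)) (hj : j ≠ 0) : nR i j ∈ Ak k := by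
  by_cases h : i = j
  · subst h
    rw [nR, dif_pos rfl]
    exact (Ak k).one_mem
  · exact Subgroup.subset_closure ⟨i, j, h, hj, Or.inr (Or.inr (Or.inl rfl))⟩

/-- `L_{ij}` as an element of the group `A_k`. -/
def Lg {k : ℕ} (i j : Fin (k + 1)) (hj : j ≠ 0) : Ak k := ⟨nL i j, nL_mem i j hj⟩

/-- `R_{ij}` as an element of the group `A_k`. -/
def Rg {k : ℕ} (i j : Fin (k + 1)) (hj : j ≠ 0) : Ak k := ⟨nR i j, nR_mem i j hj⟩

end PRA
namespace PRA

/-- The `*`-operation on the real group ring `ℝ[G]`: the linear extension of `g ↦ g⁻¹`. -/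
def gstar {G : Type*} [Group G] (ξ : MonoidAlgebra ℝ G) : MonoidAlgebra ℝ G :=
  MonoidAlgebra.ofCoeff (Finsupp.mapDomain (fun g : G => g⁻¹) ξ.coeff)

/-- An element of `ℝ[G]` is a sum of squares if it equals `Σ_i ξ_i* ξ_i`
for finitely many `ξ_i ∈ ℝ[G]`. -/
def IsSOS {G : Type*} [Group G] (ξ : MonoidAlgebra ℝ G) : Prop :=
  ∃ (n : ℕ) (f : Fin n → MonoidAlgebra ℝ G), ξ = ∑ m : Fin n, gstar (f m) * f m

variable {K : ℕ}

/-- The partial Laplacian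
`Δ_{ij} = (1−L_{ij})(1−L_{ij})* + (1−R_{ij})(1−R_{ij})* ∈ ℝ[A_K]`
(for `i = j` both Nielsen automorphisms are `1` and `Δ_{ii} = 0`). -/
def Del (K : ℕ) (i j : Fin (K + 1)) (hj : j ≠ 0) : MonoidAlgebra ℝ (Ak K) :=
  (1 - MonoidAlgebra.of ℝ (Ak K) (Lg i j hj)) *
      gstar (1 - MonoidAlgebra.of ℝ (Ak K) (Lg i j hj)) +
    (1 - MonoidAlgebra.of ℝ (Ak K) (Rg i j hj)) *
      gstar (1 - MonoidAlgebra.of ℝ (Ak K) (Rg i j hj))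

/-- The embedding of the index range `{1,…,m}` into `{0,1,…,K}` for `m ≤ K`. -/
def idx {K m : ℕ} (h : m ≤ K) (s : Fin m) : Fin (K + 1) :=
  (Fin.castLE h s).succ

lemma idx_ne_zero {K m : ℕ} (h : m ≤ K) (s : Fin m) : idx h s ≠ 0 :=
  Fin.succ_ne_zero _

/-- `Δ_m^C = Σ_{s=1}^m Δ_{0s}`, as an element of `ℝ[A_K]`. -/
def DelC (K m : ℕ) (h : m ≤ K) : MonoidAlgebra ℝ (Ak K) :=
  ∑ s : Fin m, Del K 0 (idx h s) (idx_ne_zero h s)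

/-- `Δ_m^N = Σ_{1 ≤ i,j ≤ m} Δ_{ij}`, as an element of `ℝ[A_K]`. -/
def DelN (K m : ℕ) (h : m ≤ K) : MonoidAlgebra ℝ (Ak K) :=
  ∑ i : Fin m, ∑ j : Fin m, Del K (idx h i) (idx h j) (idx_ne_zero h j)

/-- The full non-normalized group Laplacian `Δ_K = Δ_K^C + Δ_K^N ∈ ℝ[A_K]`. -/
def DelFull (K : ℕ) : MonoidAlgebra ℝ (Ak K) :=
  DelC K K le_rfl + DelN K K le_rfl

end PRA
set_option linter.unusedSectionVars false

namespace PRA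

variable {α : Type*} [DecidableEq α]

/-- The automorphism of the free group induced by a permutation of the generators. -/
def permAut (e : α ≃ α) : MulAut (FreeGroup α) := FreeGroup.freeGroupCongr e

lemma permAut_apply_of (e : α ≃ α) (a : α) :
    permAut e (FreeGroup.of a) = FreeGroup.of (e a) := by
  simp [permAut]

lemma permAut_inv_apply_of (e : α ≃ α) (a : α) :
    (permAut e)⁻¹ (FreeGroup.of a) = FreeGroup.of (e.symm a) := by
  show ((permAut e).symm) (FreeGroup.of a) = _
  rw [permAut, FreeGroup.freeGroupCongr_symm]
  exact permAut_apply_of e.symm a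

lemma nL_apply_of {i j : α} (h : i ≠ j) (a : α) :
    nL i j (FreeGroup.of a)
      = if a = i then FreeGroup.of j * FreeGroup.of a else FreeGroup.of a := by
  rw [nL, dif_neg h]
  show lA i j (FreeGroup.of a) = _
  simp [lA]

lemma nR_apply_of {i j : α} (h : i ≠ j) (a : α) :
    nR i j (FreeGroup.of a)
      = if a = i then FreeGroup.of a * FreeGroup.of j else FreeGroup.of a := by
  rw [nR, dif_neg h]
  show rA i j (FreeGroup.of a) = _
  simp [rA]

lemma permAut_conj_nL (e : α ≃ α) (i j : α) :
    permAut e * nL i j * (permAut e)⁻¹ = nL (e i) (e j) := by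
  by_cases h : i = j
  · subst h
    rw [nL, dif_pos rfl, nL, dif_pos rfl, mul_one, mul_inv_cancel]
  · have h' : e i ≠ e j := fun hc => h (e.injective hc)
    apply MulEquiv.toMonoidHom_injective
    apply FreeGroup.ext_hom
    intro a
    show (permAut e) (nL i j ((permAut e)⁻¹ (FreeGroup.of a))) = nL (e i) (e j) (FreeGroup.of a)
    rw [permAut_inv_apply_of, nL_apply_of h, nL_apply_of h']
    by_cases ha : a = e i
    · rw [if_pos (by rw [ha, Equiv.symm_apply_apply]), if_pos ha, map_mul,
        permAut_apply_of, permAut_apply_of, ha, Equiv.apply_symm_apply]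
    · rw [if_neg (fun hc => ha (by rw [← e.apply_symm_apply a, hc])), if_neg ha,
        permAut_apply_of, Equiv.apply_symm_apply]

lemma permAut_conj_nR (e : α ≃ α) (i j : α) :
    permAut e * nR i j * (permAut e)⁻¹ = nR (e i) (e j) := by
  by_cases h : i = j
  · subst h
    rw [nR, dif_pos rfl, nR, dif_pos rfl, mul_one, mul_inv_cancel]
  · have h' : e i ≠ e j := fun hc => h (e.injective hc)
    apply MulEquiv.toMonoidHom_injective
    apply FreeGroup.ext_hom
    intro a
    show (permAut e) (nR i j ((permAut e)⁻¹ (FreeGroup.of a))) = nR (e i) (e j) (FreeGroup.of a)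
    rw [permAut_inv_apply_of, nR_apply_of h, nR_apply_of h']
    by_cases ha : a = e i
    · rw [if_pos (by rw [ha, Equiv.symm_apply_apply]), if_pos ha, map_mul,
        permAut_apply_of, permAut_apply_of, ha, Equiv.apply_symm_apply]
    · rw [if_neg (fun hc => ha (by rw [← e.apply_symm_apply a, hc])), if_neg ha,
        permAut_apply_of, Equiv.apply_symm_apply]

lemma conjA_mem {k : ℕ} (e : Fin (k + 1) ≃ Fin (k + 1)) (he : e 0 = 0)
    {ψ : MulAut (FreeGroup (Fin (k + 1)))} (hψ : ψ ∈ Ak k) :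
    permAut e * ψ * (permAut e)⁻¹ ∈ Ak k := by
  induction hψ using Subgroup.closure_induction with
  | mem x hx =>
      obtain ⟨i, j, hij, hj, hx⟩ := hx
      have hij' : e i ≠ e j := fun hc => hij (e.injective hc)
      have hj' : e j ≠ 0 := fun hc => hj (e.injective (by rw [hc, he]))
      rcases hx with rfl | rfl | rfl | rfl
      · exact Subgroup.subset_closure ⟨e i, e j, hij', hj', Or.inl (permAut_conj_nL e i j)⟩
      · refine Subgroup.subset_closure ⟨e i, e j, hij', hj', Or.inr (Or.inl ?_)⟩
        rw [← permAut_conj_nL e i j]; group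
      · exact Subgroup.subset_closure
          ⟨e i, e j, hij', hj', Or.inr (Or.inr (Or.inl (permAut_conj_nR e i j)))⟩
      · refine Subgroup.subset_closure ⟨e i, e j, hij', hj', Or.inr (Or.inr (Or.inr ?_))⟩
        rw [← permAut_conj_nR e i j]; group
  | one =>
      have h1 : permAut e * 1 * (permAut e)⁻¹ = 1 := by group
      rw [h1]; exact (Ak k).one_mem
  | mul x y _ _ ihx ihy =>
      have hmul : permAut e * (x * y) * (permAut e)⁻¹
          = (permAut e * x * (permAut e)⁻¹) * (permAut e * y * (permAut e)⁻¹) := by group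
      rw [hmul]; exact (Ak k).mul_mem ihx ihy
  | inv x _ ihx =>
      have hinv : permAut e * x⁻¹ * (permAut e)⁻¹
          = (permAut e * x * (permAut e)⁻¹)⁻¹ := by group
      rw [hinv]; exact (Ak k).inv_mem ihx

/-- The permutation of `{0, 1, …, K}` induced by a permutation of `{1, …, K}` fixing `0`. -/
def extPerm (K : ℕ) (σ : Equiv.Perm (Fin K)) : Equiv.Perm (Fin (K + 1)) :=
  (finSuccEquiv K).trans ((Equiv.optionCongr σ).trans (finSuccEquiv K).symm)

lemma extPerm_zero (K : ℕ) (σ : Equiv.Perm (Fin K)) : extPerm K σ 0 = 0 := by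
  simp [extPerm]

/-- The action of a permutation `σ ∈ S_K` on `A_K` by conjugation by the automorphism of
`F_{K+1}` permuting `x_1, …, x_K` according to `σ` and fixing `x_0`;
it satisfies `σ.L_{ij} = L_{σ(i)σ(j)}` and `σ.R_{ij} = R_{σ(i)σ(j)}`. -/
def conjPerm (K : ℕ) (σ : Equiv.Perm (Fin K)) (ψ : Ak K) : Ak K :=
  ⟨permAut (extPerm K σ) * (ψ : MulAut (FreeGroup (Fin (K + 1)))) * (permAut (extPerm K σ))⁻¹,
    conjA_mem (extPerm K σ) (extPerm_zero K σ) ψ.2⟩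

/-- The symmetrization operator `S(ξ) = Σ_{σ ∈ S_K} σ.ξ` on `ℝ[A_K]`. -/
def symmize (K : ℕ) (ξ : MonoidAlgebra ℝ (Ak K)) : MonoidAlgebra ℝ (Ak K) :=
  ∑ σ : Equiv.Perm (Fin K), MonoidAlgebra.ofCoeff (Finsupp.mapDomain (conjPerm K σ) ξ.coeff)

end PRA
namespace PRA

/-- `Adj_m^N = Σ_{|{i,j,l}|=3} Δ_{ij}(Δ_{il}+Δ_{li}+Δ_{jl}+Δ_{lj})`,
as an element of `ℝ[A_K]`. -/
def AdjN (K m : ℕ) (h : m ≤ K) : MonoidAlgebra ℝ (Ak K) :=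
  ∑ i : Fin m, ∑ j : Fin m, ∑ l : Fin m,
    if i ≠ j ∧ i ≠ l ∧ j ≠ l then
      Del K (idx h i) (idx h j) (idx_ne_zero h j) *
        (Del K (idx h i) (idx h l) (idx_ne_zero h l) +
          Del K (idx h l) (idx h i) (idx_ne_zero h i) +
          Del K (idx h j) (idx h l) (idx_ne_zero h l) +
          Del K (idx h l) (idx h j) (idx_ne_zero h j))
    else 0

/-- `Opp_m^N = Σ_{|{i,j,l,m'}|=4} Δ_{ij}Δ_{lm'}`, as an element of `ℝ[A_K]`. -/
def OppN (K m : ℕ) (h : m ≤ K) : MonoidAlgebra ℝ (Ak K) :=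
  ∑ i : Fin m, ∑ j : Fin m, ∑ l : Fin m, ∑ n : Fin m,
    if i ≠ j ∧ i ≠ l ∧ i ≠ n ∧ j ≠ l ∧ j ≠ n ∧ l ≠ n then
      Del K (idx h i) (idx h j) (idx_ne_zero h j) * Del K (idx h l) (idx h n) (idx_ne_zero h n)
    else 0

end PRA

/-!
Each of `Adj_m^N` and `Opp_m^N` is a sum `Σ_e T(e)` of one term per injection `e` of
`Fin 3` (resp. `Fin 4`) into `{1, …, m}`, and `σ ∈ S_K` acts on these terms by `σ.T(e) = T(σ ∘ e)`.
As `S_K` acts transitively on the injections `Fin n ↪ Fin K`, `Σ_σ T(σ ∘ e)` does not depend on `e`;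
averaging over all `e` shows it equals `(K - n)! · Σ_E T(E)`. Summing over the
`k (k - 1) ⋯ (k - n + 1)` injections into `{1, …, k}` gives the stated factors.
-/

section Embeddings

variable {β M : Type*} [Fintype β] [DecidableEq β] [AddCommMonoid M]

lemma sum_pi_fin_succ {n : ℕ} (F : (Fin (n + 1) → β) → M) :
    ∑ f, F f = ∑ a, ∑ f : Fin n → β, F (Fin.cons a f) :=
  (Fintype.sum_equiv (Fin.consEquiv fun _ => β) _ _ fun _ => rfl).symm.trans
    (Fintype.sum_prod_type _)

lemma sum_embedding_eq_sum_injective {n : ℕ} (F : (Fin n → β) → M) :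
    ∑ e : Fin n ↪ β, F e = ∑ f, if Function.Injective f then F f else 0 := by
  rw [← Finset.sum_filter]
  exact Finset.sum_bij' (fun e _ => e) (fun f hf => ⟨f, (Finset.mem_filter.mp hf).2⟩)
    (by simp [Function.Embedding.injective]) (by simp) (by simp) (by simp) (by simp)

lemma sum_embedding_fin_three (g : β → β → β → M) :
    ∑ e : Fin 3 ↪ β, g (e 0) (e 1) (e 2)
      = ∑ i, ∑ j, ∑ l, if i ≠ j ∧ i ≠ l ∧ j ≠ l then g i j l else 0 := by
  simp only [sum_embedding_eq_sum_injective (fun f : Fin 3 → β => g (f 0) (f 1) (f 2)),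
    sum_pi_fin_succ, Fintype.sum_unique, Fin.cons_injective_iff, Fin.range_cons, Set.mem_insert_iff,
    Matrix.range_empty, Set.mem_empty_iff_false, not_or, not_false_eq_true, and_assoc, and_true,
    Function.injective_of_subsingleton, ne_eq]
  rfl

lemma sum_embedding_fin_four (g : β → β → β → β → M) :
    ∑ e : Fin 4 ↪ β, g (e 0) (e 1) (e 2) (e 3)
      = ∑ i, ∑ j, ∑ l, ∑ n,
          if i ≠ j ∧ i ≠ l ∧ i ≠ n ∧ j ≠ l ∧ j ≠ n ∧ l ≠ n then g i j l n else 0 := by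
  simp only [sum_embedding_eq_sum_injective (fun f : Fin 4 → β => g (f 0) (f 1) (f 2) (f 3)),
    sum_pi_fin_succ, Fintype.sum_unique, Fin.cons_injective_iff, Fin.range_cons, Set.mem_insert_iff,
    Matrix.range_empty, Set.mem_empty_iff_false, not_or, not_false_eq_true, and_assoc, and_true,
    Function.injective_of_subsingleton, ne_eq]
  rfl

end Embeddings

section PermSum

open Equiv

variable {α M : Type*} [Fintype α] [DecidableEq α] [AddCommMonoid M] [IsAddTorsionFree M]

lemma sum_perm_smul_embedding {n : ℕ} (f : (Fin n ↪ α) → M) (e : Fin n ↪ α) :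
    ∑ σ : Perm α, f (σ • e) = (Fintype.card α - n).factorial • ∑ E, f E := by
  -- By transitivity the sum does not depend on `e`; averaging over all `e` then computes it.
  have hconst : ∀ E, ∑ σ : Perm α, f (σ • E) = ∑ σ : Perm α, f (σ • e) := fun E => by
    obtain ⟨τ, rfl⟩ := Perm.exists_smul_eq_embedding e E
    exact Fintype.sum_equiv (Equiv.mulRight τ) _ _ fun σ => by simp [mul_smul]
  have hdouble : (Fintype.card α).descFactorial n • ∑ σ : Perm α, f (σ • e)
      = (Fintype.card α).factorial • ∑ E, f E := by
    calc _ = ∑ E : Fin n ↪ α, ∑ σ : Perm α, f (σ • E) := by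
          simp [hconst, Fintype.card_embedding_eq]
      _ = ∑ σ : Perm α, ∑ E : Fin n ↪ α, f (σ • E) := Finset.sum_comm
      _ = ∑ _σ : Perm α, ∑ E, f E := Finset.sum_congr rfl fun σ _ =>
          Fintype.sum_equiv (MulAction.toPerm σ) _ _ fun _ => rfl
      _ = _ := by simp [Fintype.card_perm]
  have hn : n ≤ Fintype.card α := by simpa using Fintype.card_le_of_embedding e
  refine nsmul_right_injective (Nat.descFactorial_pos.mpr hn).ne' ?_
  simp only [hdouble, smul_smul]
  rw [mul_comm, Nat.factorial_mul_descFactorial hn]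

end PermSum

namespace PRA
open Equiv

section GroupRing

variable {G H : Type*} [Group G] [Group H]

lemma gstar_mapDomain (φ : G →* H) (x : MonoidAlgebra ℝ G) :
    gstar (MonoidAlgebra.mapDomain φ x) = MonoidAlgebra.mapDomain φ (gstar x) := by
  simp only [gstar, MonoidAlgebra.mapDomain, MonoidAlgebra.coeff_ofCoeff, ← Finsupp.mapDomain_comp]
  congr 2
  ext g
  exact (map_inv φ g).symm

lemma mapDomainRingHom_one_sub_of_mul_gstar (φ : G →* H) (g : G) :
    MonoidAlgebra.mapDomainRingHom ℝ φ
        ((1 - MonoidAlgebra.of ℝ G g) * gstar (1 - MonoidAlgebra.of ℝ G g))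
      = (1 - MonoidAlgebra.of ℝ H (φ g)) * gstar (1 - MonoidAlgebra.of ℝ H (φ g)) := by
  have h : MonoidAlgebra.mapDomainRingHom ℝ φ (1 - MonoidAlgebra.of ℝ G g)
      = 1 - MonoidAlgebra.of ℝ H (φ g) := by
    rw [map_sub, map_one, MonoidAlgebra.mapDomainRingHom_apply, MonoidAlgebra.of_apply,
      MonoidAlgebra.of_apply, MonoidAlgebra.mapDomain_single]
  rw [map_mul, ← h]
  exact congrArg _ (gstar_mapDomain φ _).symm

end GroupRing

variable {K : ℕ}

def conjPermHom (K : ℕ) (σ : Perm (Fin K)) : Ak K →* Ak K where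
  toFun := conjPerm K σ
  map_one' := Subtype.ext (by simp [conjPerm])
  map_mul' x y := Subtype.ext (by simp [conjPerm, mul_assoc])

lemma symmize_eq_sum (ξ : MonoidAlgebra ℝ (Ak K)) :
    symmize K ξ = ∑ σ, MonoidAlgebra.mapDomainRingHom ℝ (conjPermHom K σ) ξ := rfl

/-- `Δ_{a+1, b+1}`: the index `a : Fin K` stands for the generator `x_{a+1}`. -/
def delta (K : ℕ) (a b : Fin K) : MonoidAlgebra ℝ (Ak K) :=
  Del K a.succ b.succ (Fin.succ_ne_zero b)

lemma extPerm_succ (σ : Perm (Fin K)) (a : Fin K) : extPerm K σ a.succ = (σ a).succ := by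
  simp [extPerm]

lemma mapDomainRingHom_conjPermHom_delta (σ : Perm (Fin K)) (a b : Fin K) :
    MonoidAlgebra.mapDomainRingHom ℝ (conjPermHom K σ) (delta K a b) = delta K (σ a) (σ b) := by
  have hL : conjPermHom K σ (Lg a.succ b.succ (Fin.succ_ne_zero b))
      = Lg (σ a).succ (σ b).succ (Fin.succ_ne_zero _) :=
    Subtype.ext <| by
      show permAut _ * nL _ _ * _ = nL _ _
      rw [permAut_conj_nL, extPerm_succ, extPerm_succ]
  have hR : conjPermHom K σ (Rg a.succ b.succ (Fin.succ_ne_zero b))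
      = Rg (σ a).succ (σ b).succ (Fin.succ_ne_zero _) :=
    Subtype.ext <| by
      show permAut _ * nR _ _ * _ = nR _ _
      rw [permAut_conj_nR, extPerm_succ, extPerm_succ]
  rw [delta, delta, Del, Del, map_add, mapDomainRingHom_one_sub_of_mul_gstar,
    mapDomainRingHom_one_sub_of_mul_gstar, hL, hR]

lemma symmize_sum_embedding {n k : ℕ} (h : k ≤ K) (T : (Fin n ↪ Fin K) → MonoidAlgebra ℝ (Ak K))
    (hT : ∀ σ E, MonoidAlgebra.mapDomainRingHom ℝ (conjPermHom K σ) (T E) = T (σ • E)) :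
    symmize K (∑ e : Fin n ↪ Fin k, T (e.trans (Fin.castLEEmb h)))
      = ((K - n).factorial * k.descFactorial n) • ∑ E, T E := by
  have : IsAddTorsionFree (MonoidAlgebra ℝ (Ak K)) :=
    IsAddTorsionFree.of_isTorsionFree ℝ _
  simp only [symmize_eq_sum, map_sum, hT]
  rw [Finset.sum_comm]
  simp only [sum_perm_smul_embedding, Fintype.card_fin, Finset.sum_const, Finset.card_univ,
    Fintype.card_embedding_eq, smul_smul, mul_comm]

def adjTerm (K : ℕ) (E : Fin 3 ↪ Fin K) : MonoidAlgebra ℝ (Ak K) :=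
  delta K (E 0) (E 1) *
    (delta K (E 0) (E 2) + delta K (E 2) (E 0) + delta K (E 1) (E 2) + delta K (E 2) (E 1))

def oppTerm (K : ℕ) (E : Fin 4 ↪ Fin K) : MonoidAlgebra ℝ (Ak K) :=
  delta K (E 0) (E 1) * delta K (E 2) (E 3)

lemma mapDomainRingHom_conjPermHom_adjTerm (σ : Perm (Fin K)) (E : Fin 3 ↪ Fin K) :
    MonoidAlgebra.mapDomainRingHom ℝ (conjPermHom K σ) (adjTerm K E) = adjTerm K (σ • E) := by
  simp only [adjTerm, map_mul, map_add, mapDomainRingHom_conjPermHom_delta,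
    Function.Embedding.smul_apply, Perm.smul_def]

lemma mapDomainRingHom_conjPermHom_oppTerm (σ : Perm (Fin K)) (E : Fin 4 ↪ Fin K) :
    MonoidAlgebra.mapDomainRingHom ℝ (conjPermHom K σ) (oppTerm K E) = oppTerm K (σ • E) := by
  simp only [oppTerm, map_mul, mapDomainRingHom_conjPermHom_delta,
    Function.Embedding.smul_apply, Perm.smul_def]

lemma AdjN_eq_sum_embedding {m : ℕ} (h : m ≤ K) :
    AdjN K m h = ∑ e : Fin 3 ↪ Fin m, adjTerm K (e.trans (Fin.castLEEmb h)) := by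
  rw [AdjN, ← sum_embedding_fin_three]
  rfl

lemma OppN_eq_sum_embedding {m : ℕ} (h : m ≤ K) :
    OppN K m h = ∑ e : Fin 4 ↪ Fin m, oppTerm K (e.trans (Fin.castLEEmb h)) := by
  rw [OppN, ← sum_embedding_fin_four]
  rfl

lemma AdjN_self : AdjN K K le_rfl = ∑ E, adjTerm K E := by
  rw [AdjN_eq_sum_embedding]
  rfl

lemma OppN_self : OppN K K le_rfl = ∑ E, oppTerm K E := by
  rw [OppN_eq_sum_embedding]
  rfl

end PRA

open PRA in
theorem statement18_general (K k : ℕ) (hkK : k ≤ K) :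
    symmize K (AdjN K k hkK)
        = (((K - 3).factorial * ((k - 2) * (k - 1) * k) : ℕ) : ℝ) • AdjN K K le_rfl ∧
      symmize K (OppN K k hkK)
        = (((K - 4).factorial * ((k - 3) * (k - 2) * (k - 1) * k) : ℕ) : ℝ) • OppN K K le_rfl := by
  constructor
  · rw [AdjN_eq_sum_embedding, symmize_sum_embedding hkK _ mapDomainRingHom_conjPermHom_adjTerm,
      AdjN_self, Nat.cast_smul_eq_nsmul]
    congr 1
    simp only [Nat.descFactorial_succ, Nat.descFactorial_zero, Nat.sub_zero]
    ring
  · rw [OppN_eq_sum_embedding, symmize_sum_embedding hkK _ mapDomainRingHom_conjPermHom_oppTerm,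
      OppN_self, Nat.cast_smul_eq_nsmul]
    congr 1
    simp only [Nat.descFactorial_succ, Nat.descFactorial_zero, Nat.sub_zero]
    ring

open PRA in
/-- For `4 ≤ k ≤ K`, in `ℝ[A_K]` one has
`S(Adj_k^N) = (K−3)!·(k−2)·(k−1)·k·Adj_K^N` and
`S(Opp_k^N) = (K−4)!·(k−3)·(k−2)·(k−1)·k·Opp_K^N`. -/
theorem statement18 (K k : ℕ) (hk : 4 ≤ k) (hkK : k ≤ K) :
    symmize K (AdjN K k hkK)
        = (((K - 3).factorial * ((k - 2) * (k - 1) * k) : ℕ) : ℝ) • AdjN K K le_rfl ∧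
      symmize K (OppN K k hkK)
        = (((K - 4).factorial * ((k - 3) * (k - 2) * (k - 1) * k) : ℕ) : ℝ) • OppN K K le_rfl :=
  statement18_general K k hkK
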